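/- arXiv:2008.09817 — 5 statements merged into one kernel-verified Lean document; each statement's English description precedes it below -/
import Mathlib

section
/- Consider the appraisal dynamics ȧ_{ij} = a_{ij}(p_j(t) − ∑ₖ a_{ik} p_k(t)) with A(t) having strictly positive diagonal and positive entries along a directed cycle r = (r₁ → r₂ → … → r_m → r₁) of distinct nodes. Then the quantity c_r(t) = ∏_{(i,j)∈r} a_{ii}(t)/a_{ij}(t) is constant in time: d/dt c_r(t) = 0. -/
/-!
Each factor `a_{ii}/a_{ij}` has logarithmic derivative `p_i - p_j`: the common term
`∑ₖ a_{ik} p_k` cancels in the quotient. The logarithmic derivative of the product is the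
sum of these, which telescopes to zero around the cycle.
-/

open Finset

theorem Fin.sum_sub_add_one_eq_zero {G : Type*} [AddCommGroup G] {m : ℕ} [NeZero m]
    (g : Fin m → G) : ∑ l, (g l - g (l + 1)) = 0 := by
  rw [sum_sub_distrib, sub_eq_zero]
  exact (Fintype.sum_equiv (Equiv.addRight 1) _ _ fun _ => rfl).symm

section LogDeriv

variable {𝕜 : Type*} [NontriviallyNormedField 𝕜]

theorem HasDerivAt.div_of_logDeriv {f g : 𝕜 → 𝕜} {a b x : 𝕜}
    (hf : HasDerivAt f (f x * a) x) (hg : HasDerivAt g (g x * b) x) (hgx : g x ≠ 0) :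
    HasDerivAt (fun s => f s / g s) (f x / g x * (a - b)) x := by
  refine (hf.fun_div hg hgx).congr_deriv ?_
  field_simp

theorem HasDerivAt.finsetProd_of_logDeriv {ι : Type*} (u : Finset ι) {f : ι → 𝕜 → 𝕜}
    {a : ι → 𝕜} {x : 𝕜} (hf : ∀ i ∈ u, HasDerivAt (f i) (f i x * a i) x) :
    HasDerivAt (∏ i ∈ u, f i ·) ((∏ i ∈ u, f i x) * ∑ i ∈ u, a i) x := by
  classical
  refine (HasDerivAt.fun_finsetProd hf).congr_deriv ?_
  rw [mul_sum]
  refine sum_congr rfl fun i hi => ?_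
  rw [smul_eq_mul, ← mul_prod_erase u (f · x) hi]
  ring

end LogDeriv

theorem stmt_8_general (n m : ℕ) [NeZero m]
    (A : ℝ → Matrix (Fin n) (Fin n) ℝ) (p : ℝ → Fin n → ℝ)
    (hderiv : ∀ t i j, HasDerivAt (fun s => A s i j)
      (A t i j * (p t j - ∑ k, A t i k * p t k)) t)
    (r : Fin m → Fin n)
    (hedge : ∀ t (l : Fin m), 0 < A t (r l) (r (l + 1))) :
    ∀ t, HasDerivAt
      (fun s => ∏ l : Fin m, A s (r l) (r l) / A s (r l) (r (l + 1)))
      0 t := by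
  intro t
  have hfactor : ∀ l ∈ univ, HasDerivAt (fun s => A s (r l) (r l) / A s (r l) (r (l + 1)))
      (A t (r l) (r l) / A t (r l) (r (l + 1)) * (p t (r l) - p t (r (l + 1)))) t := by
    intro l _
    refine ((hderiv t (r l) (r l)).div_of_logDeriv (hderiv t (r l) (r (l + 1)))
      (hedge t l).ne').congr_deriv ?_
    ring
  refine (HasDerivAt.finsetProd_of_logDeriv univ hfactor).congr_deriv ?_
  rw [Fin.sum_sub_add_one_eq_zero (fun l => p t (r l)), mul_zero]

/-- Along any directed cycle of distinct nodes with positive edges, the cycle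
quantity c_r(t) = ∏_{(i,j)∈r} a_{ii}(t)/a_{ij}(t) is conserved under the
replicator appraisal dynamics. -/
theorem stmt_8 (n m : ℕ) [NeZero m] (hm : 2 ≤ m)
    (A : ℝ → Matrix (Fin n) (Fin n) ℝ) (p : ℝ → Fin n → ℝ)
    (hderiv : ∀ t i j, HasDerivAt (fun s => A s i j)
      (A t i j * (p t j - ∑ k, A t i k * p t k)) t)
    (r : Fin m → Fin n) (hr : Function.Injective r)
    (hdiag : ∀ t i, 0 < A t i i)
    (hedge : ∀ t (l : Fin m), 0 < A t (r l) (r (l + 1))) :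
    ∀ t, HasDerivAt
      (fun s => ∏ l : Fin m, A s (r l) (r l) / A s (r l) (r (l + 1)))
      0 t :=
  stmt_8_general n m A p hderiv r hedge
end

section
/- Let A₀ be an n×n row-stochastic matrix with strictly positive diagonal, and let v : [0,T] → ℝ^n_{>0} satisfy v̇ᵢ = vᵢ(p_i(t) − q(t)) for a common scalar function q(t), with v(0) = 𝟙. Define 𝒜(v) = diag(A₀v)^{-1} A₀ diag(v), i.e. a_{ij} = a_{ij}(0)v_j / ∑ₖ a_{ik}(0)v_k. Then A(t) = 𝒜(v(t)) satisfies A(0) = A₀, A(t) is row-stochastic, and ȧ_{ij} = a_{ij}(p_j(t) − ∑ₖ a_{ik}(t)p_k(t)). -/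
/-!
Writing `S = ∑ₖ a⁰ᵢₖ vₖ`, the quotient rule gives
`ȧᵢⱼ / aᵢⱼ = v̇ⱼ / vⱼ - Ṡ / S = (pⱼ - q) - (∑ₖ aᵢₖ pₖ - q)`:
the common drift `q` cancels, leaving the replicator equation.
-/

open Finset

section Share

variable {ι : Type*} [Fintype ι]

/-- Row `i` of `diag(A₀v)⁻¹ A₀ diag(v)` is `share (A₀ i) v`. -/
noncomputable def share (w x : ι → ℝ) (j : ι) : ℝ :=
  w j * x j / ∑ k, w k * x k

lemma weightedSum_pos {w x : ι → ℝ} (hw : ∀ k, 0 ≤ w k) (hx : ∀ k, 0 < x k)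
    {i : ι} (hwi : 0 < w i) : 0 < ∑ k, w k * x k :=
  sum_pos' (fun k _ => mul_nonneg (hw k) (hx k).le) ⟨i, mem_univ i, mul_pos hwi (hx i)⟩

lemma share_nonneg {w x : ι → ℝ} (hw : ∀ k, 0 ≤ w k) (hx : ∀ k, 0 ≤ x k) (j : ι) :
    0 ≤ share w x j :=
  div_nonneg (mul_nonneg (hw j) (hx j)) (sum_nonneg fun k _ => mul_nonneg (hw k) (hx k))

lemma sum_share {w x : ι → ℝ} (h : ∑ k, w k * x k ≠ 0) : ∑ j, share w x j = 1 := by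
  simp only [share]
  rw [← sum_div, div_self h]

lemma share_const_one {w : ι → ℝ} (hw : ∑ k, w k = 1) (j : ι) :
    share w (fun _ => 1) j = w j := by
  simp [share, hw]

lemma hasDerivAt_share (w : ι → ℝ) {x : ℝ → ι → ℝ} {g : ι → ℝ} {c t : ℝ}
    (hx : ∀ k, HasDerivAt (fun s => x s k) (x t k * (g k - c)) t)
    (hS : ∑ k, w k * x t k ≠ 0) (j : ι) :
    HasDerivAt (fun s => share w (x s) j)
      (share w (x t) j * (g j - ∑ k, share w (x t) k * g k)) t := by
  have hsum : HasDerivAt (fun s => ∑ k, w k * x s k) (∑ k, w k * (x t k * (g k - c))) t :=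
    HasDerivAt.fun_sum fun k _ => (hx k).const_mul (w k)
  refine (((hx j).const_mul (w j)).fun_div hsum hS).congr_deriv ?_
  have hdrift : ∑ k, w k * (x t k * (g k - c))
      = ∑ k, w k * x t k * g k - c * ∑ k, w k * x t k := by
    rw [mul_sum, ← sum_sub_distrib]
    exact sum_congr rfl fun k _ => by ring
  have hmean : ∑ k, share w (x t) k * g k = (∑ k, w k * x t k * g k) / ∑ k, w k * x t k := by
    rw [sum_div]
    exact sum_congr rfl fun k _ => by rw [share]; ring
  rw [hmean, hdrift, share]
  field_simp
  ring

end Share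

theorem stmt_9_general (n : ℕ) (A0 : Matrix (Fin n) (Fin n) ℝ)
    (hA0nonneg : ∀ i j, 0 ≤ A0 i j)
    (hA0row : ∀ i, ∑ j, A0 i j = 1)
    (hA0diag : ∀ i, 0 < A0 i i)
    (p : ℝ → Fin n → ℝ)
    (q : ℝ → ℝ)
    (v : ℝ → Fin n → ℝ) (hvpos : ∀ t i, 0 < v t i)
    (hv0 : ∀ i, v 0 i = 1)
    (hvderiv : ∀ t i, HasDerivAt (fun s => v s i) (v t i * (p t i - q t)) t)
    (A : ℝ → Matrix (Fin n) (Fin n) ℝ)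
    (hA : ∀ t i j, A t i j = A0 i j * v t j / ∑ k, A0 i k * v t k) :
    (∀ i j, A 0 i j = A0 i j) ∧
    (∀ t, (∀ i j, 0 ≤ A t i j) ∧ (∀ i, ∑ j, A t i j = 1)) ∧
    (∀ t i j, HasDerivAt (fun s => A s i j)
      (A t i j * (p t j - ∑ k, A t i k * p t k)) t) := by
  have hA_share : A = fun t i => share (A0 i) (v t) := by
    funext t i j
    exact hA t i j
  have hS : ∀ t i, ∑ k, A0 i k * v t k ≠ 0 := fun t i =>
    (weightedSum_pos (hA0nonneg i) (hvpos t) (hA0diag i)).ne'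
  subst hA_share
  dsimp only
  refine ⟨fun i j => ?_, fun t => ⟨fun i j => ?_, fun i => ?_⟩, fun t i j => ?_⟩
  · rw [show v 0 = fun _ => 1 from funext hv0]
    exact share_const_one (hA0row i) j
  · exact share_nonneg (hA0nonneg i) (fun k => (hvpos t k).le) j
  · exact sum_share (hS t i)
  · exact hasDerivAt_share (A0 i) (fun k => hvderiv t k) (hS t i) j

/-- Order reduction: if v satisfies v̇ᵢ = vᵢ(pᵢ − q) with v(0) = 𝟙, then
A(t) = diag(A₀v)⁻¹ A₀ diag(v) starts at A₀, stays row-stochastic, and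
satisfies the replicator appraisal dynamics. -/
theorem stmt_9 (n : ℕ) (A0 : Matrix (Fin n) (Fin n) ℝ)
    (hA0nonneg : ∀ i j, 0 ≤ A0 i j)
    (hA0row : ∀ i, ∑ j, A0 i j = 1)
    (hA0diag : ∀ i, 0 < A0 i i)
    (p : ℝ → Fin n → ℝ) (hp : ∀ k, Continuous fun t => p t k)
    (q : ℝ → ℝ) (hq : Continuous q)
    (v : ℝ → Fin n → ℝ) (hvpos : ∀ t i, 0 < v t i)
    (hv0 : ∀ i, v 0 i = 1)
    (hvderiv : ∀ t i, HasDerivAt (fun s => v s i) (v t i * (p t i - q t)) t)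
    (A : ℝ → Matrix (Fin n) (Fin n) ℝ)
    (hA : ∀ t i j, A t i j = A0 i j * v t j / ∑ k, A0 i k * v t k) :
    (∀ i j, A 0 i j = A0 i j) ∧
    (∀ t, (∀ i j, 0 ≤ A t i j) ∧ (∀ i, ∑ j, A t i j = 1)) ∧
    (∀ t i j, HasDerivAt (fun s => A s i j)
      (A t i j * (p t j - ∑ k, A t i k * p t k)) t) :=
  stmt_9_general n A0 hA0nonneg hA0row hA0diag p q v hvpos hv0 hvderiv A hA
end

section
/- Let A be row-stochastic with w* = v_left(A*) for a row-stochastic matrix A* sharing the support of A, where (A*)ᵀw* = w*. Along the ASAP dynamics with donor-controlled work flow (ẇ = −w + Aᵀw, Ȧ = A diag(p(w)) − diag(Ap(w))A), the function V(A,w) = −∑ᵢ ( ∫_{w*ᵢ}^{wᵢ} p_i(x)dx + w*ᵢ ∑_{k:(i,k)∈E} a*_{ik} ln(a_{ik}/a*_{ik}) ) has Lie derivative V̇(A,w) = p(w)ᵀ(Iₙ − Aᵀ)(w − w*). -/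
/-!
Differentiate `V` term by term. The integral terms contribute `p(w)ᵀ ẇ` by the fundamental
theorem of calculus. Since `ȧ_ik = a_ik (p_k − (A p)_i)`, each logarithm `ln (a_ik / a*_ik)` has
derivative `p_k − (A p)_i`; on the zero pattern of `A*` the term vanishes identically, and off it
`a_ik ≠ 0` because `A` and `A*` share their support. Summing with weights `w*_i a*_ik` and using
that `A*` is row-stochastic with `(A*)ᵀ w* = w*` leaves `p(w)ᵀ (w* − Aᵀ w*)`.
-/

open Finset

theorem Continuous.hasDerivAt_intervalIntegral_comp {f u : ℝ → ℝ} {u' t : ℝ}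
    (hf : Continuous f) (a : ℝ) (hu : HasDerivAt u u' t) :
    HasDerivAt (fun s => ∫ x in a..u s, f x) (f (u t) * u') t :=
  (hf.integral_hasStrictDerivAt a (u t)).hasDerivAt.comp t hu

theorem HasDerivAt.const_mul_log_div {f : ℝ → ℝ} {c g t : ℝ}
    (hf : HasDerivAt f (f t * g) t) (hc : c ≠ 0 → f t ≠ 0) :
    HasDerivAt (fun s => c * Real.log (f s / c)) (c * g) t := by
  rcases eq_or_ne c 0 with rfl | hc0
  · simpa using hasDerivAt_const t (0 : ℝ)
  · have hft := hc hc0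
    refine ((hf.div_const c).log (div_ne_zero hft hc0)).const_mul c |>.congr_deriv ?_
    field_simp

theorem sum_mul_sum_mul_sub_eq_of_stationary {ι R : Type*} [Fintype ι] [CommRing R]
    (B A : Matrix ι ι R) (v q : ι → R) (hB_row : ∀ i, ∑ k, B i k = 1) (hv : ∀ i, ∑ k, B k i * v k = v i) :
    ∑ i, v i * ∑ k, B i k * (q k - ∑ l, A i l * q l) =
      ∑ i, q i * (v i - ∑ k, A k i * v k) := by
  have hrow_mean : ∀ i, ∑ k, B i k * (q k - ∑ l, A i l * q l) =
      ∑ k, B i k * q k - ∑ l, A i l * q l := fun i => by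
    simp only [mul_sub, sum_sub_distrib, ← sum_mul, hB_row, one_mul]
  have hswap : ∀ M : Matrix ι ι R,
      ∑ i, v i * ∑ k, M i k * q k = ∑ k, q k * ∑ i, M i k * v i := fun M => by
    simp only [mul_sum]
    rw [sum_comm]
    exact sum_congr rfl fun _ _ => sum_congr rfl fun _ _ => by ring
  simp only [hrow_mean, mul_sub (v _), mul_sub (q _), sum_sub_distrib, hswap, hv]

theorem stmt_15_general (n : ℕ) (p : Fin n → ℝ → ℝ)
    (hp : ∀ i, Continuous (p i))
    (Astar : Matrix (Fin n) (Fin n) ℝ) (wstar : Fin n → ℝ)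
    (hAs_row : ∀ i, ∑ j, Astar i j = 1)
    (heig : ∀ i, ∑ k, Astar k i * wstar k = wstar i)
    (A : ℝ → Matrix (Fin n) (Fin n) ℝ) (w : ℝ → Fin n → ℝ)
    (hzero : ∀ t i j, A t i j = 0 ↔ Astar i j = 0)
    (hwderiv : ∀ t i, HasDerivAt (fun s => w s i)
      (-(w t i) + ∑ k, A t k i * w t k) t)
    (hAderiv : ∀ t i j, HasDerivAt (fun s => A s i j)
      (A t i j * (p j (w t j) - ∑ k, A t i k * p k (w t k))) t)
    (V : ℝ → ℝ)
    (hV : ∀ t, V t = -∑ i, ((∫ x in (wstar i)..(w t i), p i x) +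
      wstar i * ∑ k, Astar i k * Real.log (A t i k / Astar i k))) :
    ∀ t, HasDerivAt V
      (∑ i, p i (w t i) *
        ((w t i - wstar i) - ∑ k, A t k i * (w t k - wstar k))) t := by
  intro t
  rw [funext hV]
  have hterm : ∀ i ∈ (univ : Finset (Fin n)), HasDerivAt
      (fun s => (∫ x in (wstar i)..(w s i), p i x) +
        wstar i * ∑ k, Astar i k * Real.log (A s i k / Astar i k))
      (p i (w t i) * (-(w t i) + ∑ k, A t k i * w t k) +
        wstar i * ∑ k, Astar i k * (p k (w t k) - ∑ l, A t i l * p l (w t l))) t :=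
    fun i _ => ((hp i).hasDerivAt_intervalIntegral_comp _ (hwderiv t i)).add
      ((HasDerivAt.fun_sum fun k _ => (hAderiv t i k).const_mul_log_div
        (mt (hzero t i k).mp)).const_mul _)
  refine (HasDerivAt.fun_sum hterm).neg.congr_deriv ?_
  rw [sum_add_distrib, sum_mul_sum_mul_sub_eq_of_stationary _ _ _ _ hAs_row heig]
  simp only [mul_sub, mul_add, sum_sub_distrib, sum_add_distrib, mul_neg, sum_neg_distrib, mul_sum]
  ring

/-- Lie derivative of the performance-entropy function along the ASAP
dynamics with donor-controlled work flow:
V̇(A,w) = p(w)ᵀ(Iₙ − Aᵀ)(w − w*). -/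
theorem stmt_15 (n : ℕ) (p : Fin n → ℝ → ℝ)
    (hp : ∀ i, Continuous (p i))
    (Astar : Matrix (Fin n) (Fin n) ℝ) (wstar : Fin n → ℝ)
    (hAs_nonneg : ∀ i j, 0 ≤ Astar i j)
    (hAs_row : ∀ i, ∑ j, Astar i j = 1)
    (hws_pos : ∀ i, 0 < wstar i) (hws_sum : ∑ i, wstar i = 1)
    (heig : ∀ i, ∑ k, Astar k i * wstar k = wstar i)
    (A : ℝ → Matrix (Fin n) (Fin n) ℝ) (w : ℝ → Fin n → ℝ)
    (hrow : ∀ t i, ∑ j, A t i j = 1)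
    (hsupp : ∀ t i j, 0 < A t i j ↔ 0 < Astar i j)
    (hzero : ∀ t i j, A t i j = 0 ↔ Astar i j = 0)
    (hwderiv : ∀ t i, HasDerivAt (fun s => w s i)
      (-(w t i) + ∑ k, A t k i * w t k) t)
    (hAderiv : ∀ t i j, HasDerivAt (fun s => A s i j)
      (A t i j * (p j (w t j) - ∑ k, A t i k * p k (w t k))) t)
    (V : ℝ → ℝ)
    (hV : ∀ t, V t = -∑ i, ((∫ x in (wstar i)..(w t i), p i x) +
      wstar i * ∑ k, Astar i k * Real.log (A t i k / Astar i k))) :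
    ∀ t, HasDerivAt V
      (∑ i, p i (w t i) *
        ((w t i - wstar i) - ∑ k, A t k i * (w t k - wstar k))) t :=
  stmt_15_general n p hp Astar wstar hAs_row heig A w hzero hwderiv hAderiv V hV
end

section
/- Consider the average-appraisal workload dynamics ẇᵢ = −wᵢ + (1/n)∑ₖ a_{ki}(t) where A(t) is row-stochastic for all t and the zero pattern of A(t) is constant in time (a_{ki}(t) = 0 whenever a_{ki}(0) = 0). If there exists an index i with w^opt_i > max{ (1/n)∑ₖ ⌈a_{ki}(0)⌉, wᵢ(0) }, then wᵢ(t) < w^opt_i for all t ≥ 0, i.e. the trajectory never reaches w^opt. -/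
/-!
Since `A(t)` is row-stochastic with a fixed zero pattern, `a_{ki}(t) ≤ ⌈a_{ki}(0)⌉`, so the forcing
term of `ẇᵢ = -wᵢ + gᵢ(t)` never exceeds `M = max {(1/n) ∑ₖ ⌈a_{ki}(0)⌉, wᵢ(0)}`. Then
`(wᵢ(t) - M) eᵗ` is antitone and nonpositive at `t = 0`, so `wᵢ(t) ≤ M < w^opt_i` for `t ≥ 0`.
-/

open Real

theorem le_ceil_of_le_one {x y : ℝ} (hy : 0 ≤ y) (hx : x ≤ 1) (hzero : y = 0 → x = 0) :
    x ≤ ⌈y⌉ := by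
  rcases hy.eq_or_lt with rfl | hpos
  · simp [hzero rfl]
  · exact hx.trans (by exact_mod_cast Int.ceil_pos.mpr hpos)

theorem antitone_sub_mul_exp_of_hasDerivAt {f g : ℝ → ℝ} {M : ℝ}
    (hf : ∀ t, HasDerivAt f (-f t + g t) t) (hg : ∀ t, g t ≤ M) :
    Antitone fun t => (f t - M) * exp t := by
  have hderiv : ∀ t, HasDerivAt (fun t => (f t - M) * exp t) ((g t - M) * exp t) t := fun t =>
    (((hf t).sub_const M).mul (hasDerivAt_exp t)).congr_deriv (by ring)
  refine antitone_of_deriv_nonpos (fun t => (hderiv t).differentiableAt) fun t => ?_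
  rw [(hderiv t).deriv]
  exact mul_nonpos_of_nonpos_of_nonneg (sub_nonpos.mpr (hg t)) (exp_pos t).le

theorem le_of_hasDerivAt_neg_add {f g : ℝ → ℝ} {M : ℝ}
    (hf : ∀ t, HasDerivAt f (-f t + g t) t) (hg : ∀ t, g t ≤ M) (h0 : f 0 ≤ M)
    {t : ℝ} (ht : 0 ≤ t) : f t ≤ M := by
  have hmono := antitone_sub_mul_exp_of_hasDerivAt hf hg ht
  simp only [exp_zero, mul_one] at hmono
  have : (f t - M) * exp t ≤ 0 := hmono.trans (sub_nonpos.mpr h0)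
  nlinarith [exp_pos t]

theorem stmt_18_general (n : ℕ) (A : ℝ → Matrix (Fin n) (Fin n) ℝ)
    (hAnonneg : ∀ t k i, 0 ≤ A t k i)
    (hArow : ∀ t k, ∑ i, A t k i = 1)
    (hpattern : ∀ t k i, A 0 k i = 0 → A t k i = 0)
    (w : ℝ → Fin n → ℝ)
    (hderiv : ∀ t i, HasDerivAt (fun s => w s i)
      (-(w t i) + (1 / (n : ℝ)) * ∑ k, A t k i) t)
    (wopt : Fin n → ℝ) (i : Fin n)
    (hcond : max ((1 / (n : ℝ)) * ∑ k, (⌈A 0 k i⌉ : ℝ)) (w 0 i) < wopt i) :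
    ∀ t, 0 ≤ t → w t i < wopt i := by
  have hentry : ∀ t k, A t k i ≤ ⌈A 0 k i⌉ := fun t k =>
    le_ceil_of_le_one (hAnonneg 0 k i)
      ((Finset.single_le_sum (fun j _ => hAnonneg t k j) (Finset.mem_univ i)).trans_eq (hArow t k))
      (hpattern t k i)
  have hforcing : ∀ t, (1 / (n : ℝ)) * ∑ k, A t k i ≤ (1 / (n : ℝ)) * ∑ k, (⌈A 0 k i⌉ : ℝ) :=
    fun t => mul_le_mul_of_nonneg_left (Finset.sum_le_sum fun k _ => hentry t k) (by positivity)
  intro t ht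
  refine (le_of_hasDerivAt_neg_add (fun s => hderiv s i) (fun s => ?_) (le_max_right _ _) ht).trans_lt
    hcond
  exact (hforcing s).trans (le_max_left _ _)

/-- Failure to learn for the average-appraisal work flow: if some agent's
optimal workload exceeds both 1/n times its in-degree and its initial
workload, then its workload stays strictly below the optimum forever. -/
theorem stmt_18 (n : ℕ) (hn : 0 < n) (A : ℝ → Matrix (Fin n) (Fin n) ℝ)
    (hAnonneg : ∀ t k i, 0 ≤ A t k i)
    (hArow : ∀ t k, ∑ i, A t k i = 1)
    (hpattern : ∀ t k i, A 0 k i = 0 → A t k i = 0)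
    (w : ℝ → Fin n → ℝ)
    (hderiv : ∀ t i, HasDerivAt (fun s => w s i)
      (-(w t i) + (1 / (n : ℝ)) * ∑ k, A t k i) t)
    (wopt : Fin n → ℝ) (i : Fin n)
    (hcond : max ((1 / (n : ℝ)) * ∑ k, (⌈A 0 k i⌉ : ℝ)) (w 0 i) < wopt i) :
    ∀ t, 0 ≤ t → w t i < wopt i :=
  stmt_18_general n A hAnonneg hArow hpattern w hderiv wopt i hcond
end

section
/- Let A₀ be an n×n row-stochastic irreducible matrix with strictly positive diagonal, and let w^opt ∈ int(Δₙ). Then there exists a vector a_d* ∈ (0,1)ⁿ such that the matrix A* = diag(a_d*) + (Iₙ − diag(a_d*))A₀ has the same zero/positive pattern as A₀ and satisfies (A*)ᵀ w^opt = w^opt, i.e. w^opt is the left dominant eigenvector of A* (normalized to unit sum). -/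
/-- A nonnegative matrix is irreducible if its associated digraph is strongly
connected, i.e. every pair of nodes is connected by some power. -/
def MatIrreducible {n : ℕ} (A : Matrix (Fin n) (Fin n) ℝ) : Prop :=
  ∀ i j, ∃ k : ℕ, 0 < (A ^ k) i j

/-- A row-stochastic irreducible matrix has a positive left fixed vector. -/
lemma exists_pos_left_fixed {n : ℕ} (hn : 0 < n) (A0 : Matrix (Fin n) (Fin n) ℝ)
    (hA0nonneg : ∀ i j, 0 ≤ A0 i j) (hA0row : ∀ i, ∑ j, A0 i j = 1)
    (hA0irr : MatIrreducible A0) :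
    ∃ v : Fin n → ℝ, (∀ i, 0 < v i) ∧ (∀ j, ∑ i, A0 i j * v i = v j) := by
  -- 1 is an eigenvalue: (A0 - 1) kills the all-ones vector
  have hdet : (A0 - 1).det = 0 := by
    rw [← Matrix.exists_mulVec_eq_zero_iff]
    refine ⟨fun _ => 1, ?_, ?_⟩
    · intro h
      have := congrFun h ⟨0, hn⟩
      simp at this
    · rw [Matrix.sub_mulVec, Matrix.one_mulVec]
      funext j
      simp [Matrix.mulVec, dotProduct, hA0row]
  have hdetT : (A0.transpose - 1).det = 0 := by
    have : (A0.transpose - 1) = (A0 - 1).transpose := by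
      rw [Matrix.transpose_sub, Matrix.transpose_one]
    rw [this, Matrix.det_transpose, hdet]
  obtain ⟨u, hu0, hu⟩ := Matrix.exists_mulVec_eq_zero_iff.mpr hdetT
  rw [Matrix.sub_mulVec, Matrix.one_mulVec, sub_eq_zero] at hu
  have hufix : ∀ j, ∑ i, A0 i j * u i = u j := by
    intro j
    have h := congrFun hu j
    simp only [Matrix.mulVec, dotProduct, Matrix.transpose_apply] at h
    exact h
  -- |u| is a nonnegative fixed vector
  set v : Fin n → ℝ := fun i => |u i| with hv
  have hle : ∀ j, v j ≤ ∑ i, A0 i j * v i := by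
    intro j
    calc v j = |∑ i, A0 i j * u i| := by rw [hufix j]
    _ ≤ ∑ i, |A0 i j * u i| := Finset.abs_sum_le_sum_abs _ _
    _ = ∑ i, A0 i j * v i := by
        refine Finset.sum_congr rfl fun i _ => ?_
        rw [abs_mul, abs_of_nonneg (hA0nonneg i j)]
  have hsum : ∑ j, ∑ i, A0 i j * v i = ∑ j, v j := by
    rw [Finset.sum_comm]
    refine Finset.sum_congr rfl fun i _ => ?_
    rw [← Finset.sum_mul, hA0row, one_mul]
  have hfix : ∀ j, ∑ i, A0 i j * v i = v j := by
    intro j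
    exact ((Finset.sum_eq_sum_iff_of_le (fun j _ => hle j)).mp hsum.symm j
      (Finset.mem_univ j)).symm
  -- nonnegativity of powers
  have hpow : ∀ k i j, 0 ≤ (A0 ^ k) i j := by
    intro k
    induction k with
    | zero => intro i j; simp [Matrix.one_apply]; positivity
    | succ k ih =>
      intro i j
      rw [pow_succ, Matrix.mul_apply]
      exact Finset.sum_nonneg fun m _ => mul_nonneg (ih i m) (hA0nonneg m j)
  -- v is fixed by all powers
  have hkfix : ∀ k j, ∑ i, (A0 ^ k) i j * v i = v j := by
    intro k
    induction k with
    | zero => intro j; simp [Matrix.one_apply]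
    | succ k ih =>
      intro j
      have : ∀ i, (A0 ^ (k+1)) i j = ∑ m, (A0 ^ k) i m * A0 m j := by
        intro i; rw [pow_succ, Matrix.mul_apply]
      simp only [this, Finset.sum_mul]
      rw [Finset.sum_comm]
      calc ∑ m, ∑ i, (A0 ^ k) i m * A0 m j * v i
          = ∑ m, A0 m j * ∑ i, (A0 ^ k) i m * v i := by
            refine Finset.sum_congr rfl fun m _ => ?_
            rw [Finset.mul_sum]
            refine Finset.sum_congr rfl fun i _ => by ring
      _ = ∑ m, A0 m j * v m := by
            refine Finset.sum_congr rfl fun m _ => by rw [ih m]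
      _ = v j := hfix j
  -- positivity
  have hvnonneg : ∀ i, 0 ≤ v i := fun i => abs_nonneg _
  obtain ⟨i0, hi0⟩ : ∃ i, u i ≠ 0 := Function.ne_iff.mp hu0
  have hi0pos : 0 < v i0 := abs_pos.mpr hi0
  refine ⟨v, fun j => ?_, hfix⟩
  obtain ⟨k, hk⟩ := hA0irr i0 j
  have : (A0 ^ k) i0 j * v i0 ≤ ∑ i, (A0 ^ k) i j * v i :=
    Finset.single_le_sum (fun i _ => mul_nonneg (hpow k i j) (hvnonneg i))
      (Finset.mem_univ i0)
  have hlt : 0 < (A0 ^ k) i0 j * v i0 := mul_pos hk hi0pos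
  linarith [hkfix k j]

/-- Existence of a diagonal modification A* = diag(a_d*) + (I − diag(a_d*))A₀
with the same zero/positive pattern as A₀ whose left dominant eigenvector is
a prescribed positive probability vector w^opt. -/
theorem stmt_19 (n : ℕ) (hn : 0 < n) (A0 : Matrix (Fin n) (Fin n) ℝ)
    (hA0nonneg : ∀ i j, 0 ≤ A0 i j) (hA0row : ∀ i, ∑ j, A0 i j = 1)
    (hA0irr : MatIrreducible A0) (hA0diag : ∀ i, 0 < A0 i i)
    (wopt : Fin n → ℝ) (hwpos : ∀ i, 0 < wopt i) (hwsum : ∑ i, wopt i = 1) :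
    ∃ ad : Fin n → ℝ, (∀ i, ad i ∈ Set.Ioo (0:ℝ) 1) ∧
      (∀ i j, ((Matrix.diagonal ad + (1 - Matrix.diagonal ad) * A0) i j = 0 ↔
        A0 i j = 0)) ∧
      (∀ j, ∑ i, (Matrix.diagonal ad + (1 - Matrix.diagonal ad) * A0) i j *
        wopt i = wopt j) := by
  obtain ⟨v, hvpos, hvfix⟩ := exists_pos_left_fixed hn A0 hA0nonneg hA0row hA0irr
  haveI : Nonempty (Fin n) := ⟨⟨0, hn⟩⟩
  set c : ℝ := Finset.univ.sup' Finset.univ_nonempty (fun i => v i / wopt i) with hc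
  have hcpos : 0 < c := by
    have := Finset.le_sup' (fun i => v i / wopt i) (Finset.mem_univ (⟨0, hn⟩ : Fin n))
    have h0 : 0 < v ⟨0, hn⟩ / wopt ⟨0, hn⟩ := div_pos (hvpos _) (hwpos _)
    linarith
  have hcw : ∀ i, v i ≤ c * wopt i := by
    intro i
    have h1 : v i / wopt i ≤ c := by
      rw [hc]; exact Finset.le_sup' (fun i => v i / wopt i) (Finset.mem_univ i)
    exact (div_le_iff₀ (hwpos i)).mp h1
  set ad : Fin n → ℝ := fun i => 1 - v i / (2 * c * wopt i) with had
  have hfrac_pos : ∀ i, 0 < v i / (2 * c * wopt i) := fun i =>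
    div_pos (hvpos i) (mul_pos (mul_pos two_pos hcpos) (hwpos i))
  have hfrac_lt : ∀ i, v i / (2 * c * wopt i) < 1 := by
    intro i
    rw [div_lt_one (mul_pos (mul_pos two_pos hcpos) (hwpos i))]
    have := hcw i
    nlinarith [mul_pos hcpos (hwpos i)]
  have hIoo : ∀ i, ad i ∈ Set.Ioo (0:ℝ) 1 := by
    intro i
    constructor
    · simp only [had]; linarith [hfrac_lt i]
    · simp only [had]; linarith [hfrac_pos i]
  have hkey : ∀ i, (1 - ad i) * wopt i = v i / (2 * c) := by
    intro i
    have hw : wopt i ≠ 0 := (hwpos i).ne'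
    have hcne : c ≠ 0 := hcpos.ne'
    simp only [had]
    field_simp
    ring
  have hentry : ∀ i j, (Matrix.diagonal ad + (1 - Matrix.diagonal ad) * A0) i j =
      (if i = j then ad i else 0) + (1 - ad i) * A0 i j := by
    intro i j
    have h1 : (1 : Matrix (Fin n) (Fin n) ℝ) - Matrix.diagonal ad =
        Matrix.diagonal (fun i => 1 - ad i) := by
      rw [← Matrix.diagonal_one, Matrix.diagonal_sub]
    rw [Matrix.add_apply, h1, Matrix.diagonal_mul, Matrix.diagonal_apply]
  refine ⟨ad, hIoo, ?_, ?_⟩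
  · intro i j
    rw [hentry]
    by_cases hij : i = j
    · subst hij
      rw [if_pos rfl]
      constructor
      · intro h
        exfalso
        nlinarith [(hIoo i).1, (hIoo i).2, hA0diag i, hA0nonneg i i]
      · exact fun h => absurd h (ne_of_gt (hA0diag i))
    · simp only [if_neg hij, zero_add]
      have h2 : (1 : ℝ) - ad i ≠ 0 := by have := (hIoo i).2; linarith
      constructor
      · intro h
        rcases mul_eq_zero.mp h with h | h
        · exact absurd h h2
        · exact h
      · intro h; rw [h, mul_zero]
  · intro j
    have hsplit : ∀ i, (Matrix.diagonal ad + (1 - Matrix.diagonal ad) * A0) i j * wopt i =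
        (if i = j then ad i * wopt i else 0) + A0 i j * (v i / (2 * c)) := by
      intro i
      rw [hentry]
      by_cases hij : i = j
      · subst hij
        simp only [if_pos rfl]
        rw [add_mul]
        congr 1
        rw [mul_comm ((1 - ad i) * A0 i i), ← mul_assoc, mul_comm (wopt i), ← hkey i]
        ring
      · simp only [if_neg hij, zero_add]
        rw [mul_comm (1 - ad i), mul_assoc, hkey i]
    simp only [hsplit]
    rw [Finset.sum_add_distrib, Finset.sum_ite_eq' Finset.univ j (fun i => ad i * wopt i)]
    simp only [Finset.mem_univ, if_pos]
    have : ∑ i, A0 i j * (v i / (2 * c)) = (∑ i, A0 i j * v i) / (2 * c) := by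
      rw [Finset.sum_div]
      exact Finset.sum_congr rfl fun i _ => by ring
    rw [this, hvfix j, ← hkey j]
    ring
end
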